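/- For an integer r ≥ 1, let W_r be the ℚ-vector space with basis {ω_{ij} : 1 ≤ i ≤ j ≤ r}, indexed by unordered pairs (with repetition allowed) of elements of {1,…,r}; write ω_{ji} = ω_{ij}. Define elements E_{ij} ∈ W_r for 0 ≤ i < j ≤ r by E_{ij} = 2ω_{ij} − ω_{ii} − ω_{jj} for 1 ≤ i < j ≤ r, and E_{0i} = −ω_{ii} for 1 ≤ i ≤ r; write E_{ji} = E_{ij}. Since {E_{ij} : 0 ≤ i < j ≤ r} is a basis of W_r, there is a unique linear action ρ of the symmetric group Sym({0,1,…,r}) on W_r satisfying ρ(σ)E_{ij} = E_{σ(i)σ(j)} for all σ and all 0 ≤ i < j ≤ r. Then: (a) for every σ ∈ Sym({0,…,r}) with σ(0) = 0, one has ρ(σ)ω_{ij} = ω_{σ(i)σ(j)} for all 1 ≤ i ≤ j ≤ r; and (b) for the transposition τ = (0 1) and all 1 ≤ i ≤ j ≤ r: ρ(τ)ω_{ij} = ω_{ij} − ω_{1i} − ω_{1j} + ω_{11} if i ≥ 2; ρ(τ)ω_{1j} = −ω_{1j} + ω_{11} if j ≥ 2; and ρ(τ)ω_{11} = ω_{11}.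 -/

import Mathlib

/-!
Read `E i j` as `-‖x i - x j‖²` for points `x 0, …, x r`; then `ω i j = ⟪x i - x 0, x j - x 0⟫`
is the Gram matrix of the points seen from the base point `x 0`, recovered from `E` by
polarization. A permutation `σ` acting on the `E i j` relabels the points, so it sends the Gram
matrix based at `x 0` to the one based at `x (σ 0)`. If `σ 0 = 0` the base point does not move,
which gives (a); for `τ = (0 1)` the base point moves to `x 1`, and (b) is the base-change formula
`⟪x i - x 1, x j - x 1⟫ = ω i j - ω 1 i - ω 1 j + ω 1 1`.
-/

section BasedGram

variable (K : Type*) {ι ι' W W' : Type*} [Field K] [AddCommGroup W] [Module K W]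
  [AddCommGroup W'] [Module K W']

/-- If `e i j = -‖x i - x j‖²`, then `basedGram K e a i j = ⟪x i - x a, x j - x a⟫`. -/
def basedGram (e : ι → ι → W) (a i j : ι) : W :=
  (2 : K)⁻¹ • (e i j - e a i - e a j)

variable {K} {e : ι → ι → W}

theorem basedGram_comm (he : ∀ i j, e i j = e j i) (a i j : ι) :
    basedGram K e a i j = basedGram K e a j i := by
  simp only [basedGram, he j i]
  module

theorem basedGram_self_left {a : ι} (ha : e a a = 0) (j : ι) : basedGram K e a a j = 0 := by
  simp only [basedGram, ha]
  module

theorem basedGram_self_right (he : ∀ i j, e i j = e j i) {a : ι} (ha : e a a = 0) (i : ι) :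
    basedGram K e a i a = 0 := by
  rw [basedGram_comm he, basedGram_self_left ha]

theorem basedGram_change_basepoint {b : ι} (hb : e b b = 0) (a i j : ι) :
    basedGram K e b i j =
      basedGram K e a i j - basedGram K e a b i - basedGram K e a b j + basedGram K e a b b := by
  simp only [basedGram, hb]
  module

theorem map_basedGram {e' : ι' → ι' → W'} (f : W →ₗ[K] W') (σ : ι → ι')
    (hf : ∀ i j, f (e i j) = e' (σ i) (σ j)) (a i j : ι) :
    f (basedGram K e a i j) = basedGram K e' (σ a) (σ i) (σ j) := by
  simp only [basedGram, map_smul, map_sub, hf]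

end BasedGram

section WithZeroDiag

variable {ι W : Type*} [AddCommGroup W]

/-- The diagonal of `E` is unconstrained; `0 = -‖x i - x i‖²` is the value for which `basedGram`
also recovers the `ω i i`. -/
def withZeroDiag [DecidableEq ι] (E : ι → ι → W) (i j : ι) : W :=
  if i = j then 0 else E i j

theorem withZeroDiag_self [DecidableEq ι] (E : ι → ι → W) (i : ι) :
    withZeroDiag E i i = 0 :=
  if_pos rfl

theorem withZeroDiag_comm [DecidableEq ι] {E : ι → ι → W} (hE : ∀ i j, E i j = E j i)
    (i j : ι) : withZeroDiag E i j = withZeroDiag E j i := by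
  simp only [withZeroDiag, eq_comm (a := i), hE i j]

variable [LinearOrder ι] {E : ι → ι → W}

theorem map_withZeroDiag {K : Type*} [Ring K] [Module K W] (hE : ∀ i j, E i j = E j i)
    (f : W →ₗ[K] W) (σ : Equiv.Perm ι) (hf : ∀ i j, i < j → f (E i j) = E (σ i) (σ j))
    (i j : ι) : f (withZeroDiag E i j) = withZeroDiag E (σ i) (σ j) := by
  rcases lt_trichotomy i j with hij | rfl | hji
  · rw [withZeroDiag, withZeroDiag, if_neg hij.ne, if_neg (σ.injective.ne hij.ne), hf i j hij]
  · rw [withZeroDiag_self, withZeroDiag_self, map_zero]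
  · rw [withZeroDiag_comm hE, withZeroDiag_comm hE (σ i), withZeroDiag, withZeroDiag,
      if_neg hji.ne, if_neg (σ.injective.ne hji.ne), hf j i hji]

theorem eq_basedGram_withZeroDiag {K : Type*} [Field K] [CharZero K] [Module K W] {o : ι}
    {ω : ι → ι → W} (hω : ∀ i j, ω i j = ω j i) (hE : ∀ i j, E i j = E j i)
    (hE₀ : ∀ i, o < i → E o i = -ω i i)
    (hE_lt : ∀ i j, o < i → i < j → E i j = (2 : K) • ω i j - ω i i - ω j j)
    {i j : ι} (hi : o < i) (hj : o < j) :
    ω i j = basedGram K (withZeroDiag E) o i j := by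
  wlog hij : i ≤ j generalizing i j
  · rw [hω, this hj hi (le_of_not_ge hij), basedGram_comm (withZeroDiag_comm hE)]
  rcases hij.eq_or_lt with rfl | hij
  · rw [basedGram, withZeroDiag_self, withZeroDiag, if_neg hi.ne, hE₀ i hi]
    module
  · simp only [basedGram, withZeroDiag, if_neg hij.ne, if_neg hi.ne, if_neg hj.ne,
      hE_lt i j hi hij, hE₀ i hi, hE₀ j hj]
    module

end WithZeroDiag

theorem cyclic_action_on_omega_basis_general
    (r : ℕ) (hr : 1 ≤ r)
    (W : Type) [AddCommGroup W] [Module ℚ W]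
    (ω : Fin (r + 1) → Fin (r + 1) → W)
    (hωsymm : ∀ i j, ω i j = ω j i)
    (E : Fin (r + 1) → Fin (r + 1) → W)
    (hEsymm : ∀ i j, E i j = E j i)
    (hE0 : ∀ i : Fin (r + 1), 0 < i → E 0 i = -ω i i)
    (hE : ∀ i j : Fin (r + 1), 0 < i → i < j →
      E i j = (2 : ℚ) • ω i j - ω i i - ω j j)
    (ρ : Equiv.Perm (Fin (r + 1)) → (W →ₗ[ℚ] W))
    (hρ : ∀ (σ : Equiv.Perm (Fin (r + 1))) (i j : Fin (r + 1)), i < j →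
      ρ σ (E i j) = E (σ i) (σ j)) :
    (∀ σ : Equiv.Perm (Fin (r + 1)), σ 0 = 0 →
      ∀ i j : Fin (r + 1), 0 < i → i ≤ j → ρ σ (ω i j) = ω (σ i) (σ j)) ∧
    (∀ i j : Fin (r + 1), 1 < i → i ≤ j →
      ρ (Equiv.swap 0 1) (ω i j) = ω i j - ω 1 i - ω 1 j + ω 1 1) ∧
    (∀ j : Fin (r + 1), 1 < j →
      ρ (Equiv.swap 0 1) (ω 1 j) = -ω 1 j + ω 1 1) ∧
    (ρ (Equiv.swap 0 1) (ω 1 1) = ω 1 1) := by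
  set e := withZeroDiag E
  have he : ∀ i j, e i j = e j i := withZeroDiag_comm hEsymm
  have hω : ∀ {i j : Fin (r + 1)}, 0 < i → 0 < j → ω i j = basedGram ℚ e 0 i j :=
    eq_basedGram_withZeroDiag hωsymm hEsymm hE0 hE
  have hρω : ∀ σ {i j : Fin (r + 1)}, 0 < i → 0 < j →
      ρ σ (ω i j) = basedGram ℚ e (σ 0) (σ i) (σ j) := fun σ i j hi hj => by
    rw [hω hi hj, map_basedGram _ σ (map_withZeroDiag hEsymm (ρ σ) σ (hρ σ))]
  have : NeZero r := ⟨by omega⟩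
  have h01 : (0 : Fin (r + 1)) < 1 := Fin.one_pos'
  have hτ : ∀ {k : Fin (r + 1)}, 1 < k → Equiv.swap 0 1 k = k := fun hk =>
    Equiv.swap_apply_of_ne_of_ne (h01.trans hk).ne' hk.ne'
  have hpos : ∀ {k : Fin (r + 1)}, 1 < k → 0 < k := h01.trans
  have he₀ : e 0 0 = 0 := withZeroDiag_self E 0
  have hbase : ∀ i j, basedGram ℚ e 1 i j = basedGram ℚ e 0 i j - basedGram ℚ e 0 1 i
      - basedGram ℚ e 0 1 j + basedGram ℚ e 0 1 1 :=
    basedGram_change_basepoint (withZeroDiag_self E 1) 0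
  refine ⟨fun σ hσ i j hi hij => ?_, fun i j hi hij => ?_, fun j hj => ?_, ?_⟩
  · have hσ_pos : ∀ {k}, 0 < k → 0 < σ k := fun hk =>
      Fin.pos_iff_ne_zero.2 (hσ ▸ σ.injective.ne hk.ne')
    have hj := hi.trans_le hij
    rw [hρω σ hi hj, hσ, hω (hσ_pos hi) (hσ_pos hj)]
  · have hj := hi.trans_le hij
    rw [hρω _ (hpos hi) (hpos hj), Equiv.swap_apply_left, hτ hi, hτ hj, hbase,
      ← hω (hpos hi) (hpos hj), ← hω h01 (hpos hi), ← hω h01 (hpos hj), ← hω h01 h01]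
  · rw [hρω _ h01 (hpos hj), Equiv.swap_apply_left, Equiv.swap_apply_right, hτ hj, hbase,
      basedGram_self_left he₀, basedGram_self_right he he₀, ← hω h01 (hpos hj), ← hω h01 h01]
    abel
  · rw [hρω _ h01 h01, Equiv.swap_apply_left, Equiv.swap_apply_right, hbase,
      basedGram_self_left he₀, basedGram_self_right he he₀, ← hω h01 h01]
    abel

/--
Let `W` be a ℚ-vector space with basis `{ω i j : 1 ≤ i ≤ j ≤ r}`
(indices in `{0,…,r}`, i.e. `Fin (r+1)`, with `ω j i = ω i j`), and let
`E i j = 2 ω i j − ω i i − ω j j` for `1 ≤ i < j ≤ r`, `E 0 i = −ω i i` for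
`1 ≤ i ≤ r`, `E j i = E i j`.  Let `ρ` assign to each permutation `σ` of `{0,…,r}` a
linear endomorphism of `W` with `ρ σ (E i j) = E (σ i) (σ j)` for all `i < j` (the
unique linear action with this property).  Then:
(a) if `σ 0 = 0` then `ρ σ (ω i j) = ω (σ i) (σ j)` for all `1 ≤ i ≤ j ≤ r`; and
(b) for the transposition `τ = (0 1)`:
    `ρ τ (ω i j) = ω i j − ω 1 i − ω 1 j + ω 1 1` for `2 ≤ i ≤ j ≤ r`,
    `ρ τ (ω 1 j) = −ω 1 j + ω 1 1` for `2 ≤ j ≤ r`, and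
    `ρ τ (ω 1 1) = ω 1 1`.
-/
theorem cyclic_action_on_omega_basis
    (r : ℕ) (hr : 1 ≤ r)
    (W : Type) [AddCommGroup W] [Module ℚ W]
    (ω : Fin (r + 1) → Fin (r + 1) → W)
    (hωsymm : ∀ i j, ω i j = ω j i)
    (hω_indep : LinearIndependent ℚ
      (fun p : {p : Fin (r + 1) × Fin (r + 1) // 0 < p.1 ∧ p.1 ≤ p.2} =>
        ω p.val.1 p.val.2))
    (hω_span : Submodule.span ℚ
      (Set.range (fun p : {p : Fin (r + 1) × Fin (r + 1) // 0 < p.1 ∧ p.1 ≤ p.2} =>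
        ω p.val.1 p.val.2)) = ⊤)
    (E : Fin (r + 1) → Fin (r + 1) → W)
    (hEsymm : ∀ i j, E i j = E j i)
    (hE0 : ∀ i : Fin (r + 1), 0 < i → E 0 i = -ω i i)
    (hE : ∀ i j : Fin (r + 1), 0 < i → i < j →
      E i j = (2 : ℚ) • ω i j - ω i i - ω j j)
    (ρ : Equiv.Perm (Fin (r + 1)) → (W →ₗ[ℚ] W))
    (hρ : ∀ (σ : Equiv.Perm (Fin (r + 1))) (i j : Fin (r + 1)), i < j →
      ρ σ (E i j) = E (σ i) (σ j)) :
    (∀ σ : Equiv.Perm (Fin (r + 1)), σ 0 = 0 →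
      ∀ i j : Fin (r + 1), 0 < i → i ≤ j → ρ σ (ω i j) = ω (σ i) (σ j)) ∧
    (∀ i j : Fin (r + 1), 1 < i → i ≤ j →
      ρ (Equiv.swap 0 1) (ω i j) = ω i j - ω 1 i - ω 1 j + ω 1 1) ∧
    (∀ j : Fin (r + 1), 1 < j →
      ρ (Equiv.swap 0 1) (ω 1 j) = -ω 1 j + ω 1 1) ∧
    (ρ (Equiv.swap 0 1) (ω 1 1) = ω 1 1) :=
  cyclic_action_on_omega_basis_general r hr W ω hωsymm E hEsymm hE0 hE ρ hρ
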